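/- For s ∈ (0,1) and |z| < 1 with z ≠ 0, the derivative with respect to z of z · ₅F₄(2−s, 3/2, 1+s, 1, 1; 2, 2, 2, 2; z) equals (2/(s(1−s)z)) · (₃F₂(1−s, 1/2, s; 1, 1; z) − 1). -/

import Mathlib

open Real Filter Set

noncomputable def poch (a : ℝ) (n : ℕ) : ℝ := ∏ i ∈ Finset.range n, (a + i)

noncomputable def F21 (a b c z : ℝ) : ℝ :=
  ∑' n : ℕ, poch a n * poch b n / (poch c n * (n.factorial : ℝ)) * z ^ n

noncomputable def F32 (a1 a2 a3 b1 b2 z : ℝ) : ℝ :=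
  ∑' n : ℕ, poch a1 n * poch a2 n * poch a3 n /
    (poch b1 n * poch b2 n * (n.factorial : ℝ)) * z ^ n

noncomputable def F54 (a1 a2 a3 a4 a5 b1 b2 b3 b4 z : ℝ) : ℝ :=
  ∑' n : ℕ, poch a1 n * poch a2 n * poch a3 n * poch a4 n * poch a5 n /
    (poch b1 n * poch b2 n * poch b3 n * poch b4 n * (n.factorial : ℝ)) * z ^ n

noncomputable def J (t : ℝ) : ℝ :=
  (1 / Real.pi ^ 3) *
    ∫ x in (0:ℝ)..Real.pi, ∫ y in (0:ℝ)..Real.pi, ∫ z in (0:ℝ)..Real.pi,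
      Real.log (t - Real.cos x - Real.cos y - Real.cos z +
        Real.cos x * Real.cos y * Real.cos z)

noncomputable def G (t : ℝ) : ℝ :=
  (1 / Real.pi ^ 3) *
    ∫ x in (0:ℝ)..Real.pi, ∫ y in (0:ℝ)..Real.pi, ∫ z in (0:ℝ)..Real.pi,
      (t - Real.cos x - Real.cos y - Real.cos z +
        Real.cos x * Real.cos y * Real.cos z)⁻¹

/-!
Writing `z · ₅F₄ = ∑ cₙ zⁿ⁺¹`, the derivative is `∑ (n + 1) cₙ zⁿ`. The shift
`(a)ₙ₊₁ = a (a + 1)ₙ` applied to `1 - s, 1/2, s` shows that `(n + 1) cₙ` is `2 / (s (1 - s))` times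
the `(n + 1)`-st coefficient of the ₃F₂, which gives the identity term by term. Termwise
differentiation is justified because `0 ≤ (n + 1) cₙ ≤ 1`, each upper parameter being at most
the corresponding lower one.
-/
open scoped Nat

lemma poch_zero (a : ℝ) : poch a 0 = 1 := by simp [poch]

lemma poch_succ (a : ℝ) (n : ℕ) : poch a (n + 1) = poch a n * (a + n) := by
  simp [poch, Finset.prod_range_succ]

lemma poch_succ' (a : ℝ) (n : ℕ) : poch a (n + 1) = a * poch (a + 1) n := by
  rw [poch, poch, Finset.prod_range_succ', mul_comm]
  push_cast
  simp only [add_zero, add_assoc, add_comm (1 : ℝ)]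

lemma poch_pos {a : ℝ} (ha : 0 < a) (n : ℕ) : 0 < poch a n :=
  Finset.prod_pos fun i _ => by positivity

lemma poch_le_poch {a b : ℝ} (ha : 0 < a) (hab : a ≤ b) (n : ℕ) : poch a n ≤ poch b n :=
  Finset.prod_le_prod (fun i _ => by positivity) fun i _ => by linarith

lemma poch_one (n : ℕ) : poch 1 n = n ! := by
  induction n with
  | zero => simp [poch_zero]
  | succ k ih => rw [poch_succ, ih, Nat.factorial_succ]; push_cast; ring

lemma poch_two (n : ℕ) : poch 2 n = (n + 1)! := by
  rw [← poch_one, poch_succ']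
  norm_num

section PowerSeries

variable {𝕜 : Type*} [RCLike 𝕜] {a : ℕ → 𝕜} {C : ℝ} {z : 𝕜}

lemma summable_mul_pow_of_norm_le (ha : ∀ n, ‖a n‖ ≤ C) (hz : ‖z‖ < 1) :
    Summable fun n => a n * z ^ n := by
  refine .of_norm_bounded ((summable_geometric_of_lt_one (norm_nonneg z) hz).mul_left C)
    fun n => ?_
  rw [norm_mul, norm_pow]
  exact mul_le_mul_of_nonneg_right (ha n) (by positivity)

lemma hasDerivAt_tsum_mul_pow_succ (ha : ∀ n : ℕ, ‖((n : 𝕜) + 1) * a n‖ ≤ C) (hz : ‖z‖ < 1) :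
    HasDerivAt (fun w => ∑' n, a n * w ^ (n + 1)) (∑' n : ℕ, ((n : 𝕜) + 1) * a n * z ^ n) z := by
  set r : ℝ := (1 + ‖z‖) / 2 with hr
  have hzr : z ∈ Metric.ball (0 : 𝕜) r := by
    rw [mem_ball_zero_iff, hr]; linarith
  have hr1 : r < 1 := by rw [hr]; linarith
  have ha' (n : ℕ) : ‖a n‖ ≤ C := by
    refine le_trans ?_ (ha n)
    rw [norm_mul, ← Nat.cast_succ, RCLike.norm_natCast]
    exact le_mul_of_one_le_left (norm_nonneg _) (by exact_mod_cast n.succ_pos)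
  refine hasDerivAt_tsum_of_isPreconnected (u := fun n => C * r ^ n)
    (g := fun n w => a n * w ^ (n + 1)) (g' := fun n w => ((n : 𝕜) + 1) * a n * w ^ n)
    ((summable_geometric_of_lt_one (by positivity) hr1).mul_left C) Metric.isOpen_ball
    (convex_ball (0 : 𝕜) r).isPreconnected (fun n y _ => ?_) (fun n y hy => ?_) hzr ?_ hzr
  · exact ((hasDerivAt_pow (n + 1) y).const_mul (a n)).congr_deriv <| by
      rw [Nat.add_sub_cancel]; push_cast; ring
  · rw [norm_mul, norm_pow]
    exact mul_le_mul (ha n) (pow_le_pow_left₀ (norm_nonneg y) (mem_ball_zero_iff.mp hy).le n)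
      (by positivity) ((norm_nonneg _).trans (ha n))
  · simpa only [pow_succ, mul_assoc, mul_comm z] using
      (summable_mul_pow_of_norm_le ha' hz).mul_right z

end PowerSeries

noncomputable def coeffF54 (s : ℝ) (n : ℕ) : ℝ :=
  poch (2 - s) n * poch (3/2) n * poch (1 + s) n * poch 1 n * poch 1 n /
    (poch 2 n * poch 2 n * poch 2 n * poch 2 n * (n ! : ℝ))

noncomputable def coeffF32 (s : ℝ) (n : ℕ) : ℝ :=
  poch (1 - s) n * poch (1/2) n * poch s n / (poch 1 n * poch 1 n * (n ! : ℝ))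

lemma two_div_mul_coeffF32_succ {s : ℝ} (hs0 : s ≠ 0) (hs1 : s ≠ 1) (n : ℕ) :
    2 / (s * (1 - s)) * coeffF32 s (n + 1) = ((n : ℝ) + 1) * coeffF54 s n := by
  have hs1' : 1 - s ≠ 0 := sub_ne_zero.mpr hs1.symm
  rw [coeffF32, coeffF54, poch_succ' (1 - s), poch_succ' (1/2), poch_succ' s, poch_one, poch_one,
    poch_two, Nat.factorial_succ]
  field_simp
  push_cast
  ring_nf

lemma abs_succ_mul_coeffF54_le_one {s : ℝ} (hs : s ∈ Set.Icc (0 : ℝ) 1) (n : ℕ) :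
    |((n : ℝ) + 1) * coeffF54 s n| ≤ 1 := by
  obtain ⟨hs0, hs1⟩ := hs
  have h1 := poch_pos (a := 2 - s) (by linarith) n
  have h2 := poch_pos (a := 3/2) (by norm_num) n
  have h3 := poch_pos (a := 1 + s) (by linarith) n
  have h4 := poch_pos (a := 2) two_pos n
  have h5 := poch_pos (a := 1) one_pos n
  have h1' := poch_le_poch (a := 2 - s) (b := 2) (by linarith) (by linarith) n
  have h2' := poch_le_poch (a := 3/2) (b := 2) (by norm_num) (by norm_num) n
  have h3' := poch_le_poch (a := 1 + s) (b := 2) (by linarith) (by linarith) n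
  have hD : 0 < poch 2 n * poch 2 n * poch 2 n * poch 2 n * (n ! : ℝ) := by positivity
  rw [abs_of_nonneg (by rw [coeffF54, poch_one]; positivity), coeffF54, mul_div_assoc',
    div_le_one hD]
  calc ((n : ℝ) + 1) * (poch (2 - s) n * poch (3/2) n * poch (1 + s) n * poch 1 n * poch 1 n)
      ≤ ((n : ℝ) + 1) * (poch 2 n * poch 2 n * poch 2 n * poch 1 n * poch 1 n) := by
        gcongr
    _ = poch 2 n * poch 2 n * poch 2 n * poch 2 n * (n ! : ℝ) := by
        rw [poch_one, poch_two, Nat.factorial_succ]; push_cast; ring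

theorem stmt0 (s z : ℝ) (hs : s ∈ Set.Ioo (0:ℝ) 1) (hz : |z| < 1) (hz0 : z ≠ 0) :
    deriv (fun w : ℝ => w * F54 (2 - s) (3/2) (1 + s) 1 1 2 2 2 2 w) z =
      (2 / (s * (1 - s) * z)) * (F32 (1 - s) (1/2) s 1 1 z - 1) := by
  have hbound := abs_succ_mul_coeffF54_le_one (Set.Ioo_subset_Icc_self hs)
  have hs0 : s ≠ 0 := hs.1.ne'
  have hs1 : s ≠ 1 := hs.2.ne
  have hF54 : (fun w : ℝ => w * F54 (2 - s) (3/2) (1 + s) 1 1 2 2 2 2 w) =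
      fun w => ∑' n, coeffF54 s n * w ^ (n + 1) := by
    funext w
    rw [F54, ← tsum_mul_left]
    exact tsum_congr fun n => by rw [coeffF54, pow_succ]; ring
  have hcoeff (n : ℕ) : coeffF32 s (n + 1) = s * (1 - s) / 2 * (((n : ℝ) + 1) * coeffF54 s n) := by
    rw [← two_div_mul_coeffF32_succ hs0 hs1]
    field_simp [sub_ne_zero.mpr hs1.symm]
  have hF32 : F32 (1 - s) (1/2) s 1 1 z = 1 + ∑' n, coeffF32 s (n + 1) * z ^ (n + 1) := by
    change ∑' n, coeffF32 s n * z ^ n = _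
    rw [tsum_eq_zero_add' ?_]
    · simp [coeffF32, poch_zero]
    · have hsum : Summable fun n : ℕ => ((n : ℝ) + 1) * coeffF54 s n * z ^ n :=
        summable_mul_pow_of_norm_le hbound hz
      simp only [hcoeff]
      exact (hsum.mul_left (s * (1 - s) / 2 * z)).congr fun n => by ring
  rw [hF54, (hasDerivAt_tsum_mul_pow_succ hbound hz).deriv, hF32, add_sub_cancel_left,
    ← tsum_mul_left]
  refine tsum_congr fun n => ?_
  rw [← two_div_mul_coeffF32_succ hs0 hs1, pow_succ]
  field_simp
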